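/- Let G be a finite simple graph with a sum labeling ℓ, let v be a vertex with exactly k terminals (i.e. exactly k vertices of G, including v itself, are not adjacent to v), let g = ℓ(v), and let M = {ℓ(x) : x ∈ V} be the label-set. Then there exists a finite set F of pairs (a,t) of natural numbers with |F| ≤ k such that: (1) M is the union over (a,t) ∈ F of the arithmetic progressions {a + i·g : 0 ≤ i ≤ t}; (2) for every (a,t) ∈ F there is a terminal w of v with ℓ(w) = a + t·g; (3) for every proper terminal w of v there is (a,t) ∈ F with ℓ(w) = a + t·g. -/

import Mathlib

/-!
Every vertex `u` adjacent to `v` has a vertex labelled `ℓ u + g` (as `ℓ v + ℓ u` must be a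
label), so starting from any vertex and repeatedly adding `g` we stay inside the label-set
until, labels being bounded, we reach a terminal of `v`. Hence every label lies on a
descending run `ℓ w, ℓ w - g, ℓ w - 2g, …` of labels starting at a terminal `w`. Taking for
each terminal the longest such run gives at most `k` progressions covering the label-set.
-/

/-- A (possibly non-injective) sum labeling of a finite simple graph `G`. -/
def IsSumLabeling {V : Type*} (G : SimpleGraph V) (ℓ : V → ℕ) : Prop :=
  (∀ v : V, 1 ≤ ℓ v) ∧
  ∀ u v : V, u ≠ v → (G.Adj u v ↔ ∃ w : V, ℓ u + ℓ v = ℓ w)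

open Classical in
noncomputable def runLength (S : Set ℕ) (g m : ℕ) : ℕ :=
  Nat.findGreatest (fun t => ∀ i ≤ t, m - i * g ∈ S) m

section runLength

variable {S : Set ℕ} {g m : ℕ}

theorem sub_mul_mem_of_le_runLength (hm : m ∈ S) {i : ℕ} (hi : i ≤ runLength S g m) :
    m - i * g ∈ S := by
  classical
  refine Nat.findGreatest_spec (P := fun t => ∀ i ≤ t, m - i * g ∈ S) (Nat.zero_le m) ?_ i hi
  intro j hj
  simpa [Nat.le_zero.mp hj] using hm

-- `0 ∉ S` keeps truncated subtraction from producing a spurious member of `S`.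
theorem runLength_mul_lt (h0 : 0 ∉ S) (hm : m ∈ S) : runLength S g m * g < m := by
  have h := sub_mul_mem_of_le_runLength (g := g) hm le_rfl
  by_contra! hle
  exact h0 (by rwa [Nat.sub_eq_zero_of_le hle] at h)

theorem le_runLength (h0 : 0 ∉ S) (hg : 0 < g) {s : ℕ} (hs : ∀ i ≤ s, m - i * g ∈ S) :
    s ≤ runLength S g m := by
  classical
  have hsm : s * g < m := by
    by_contra! hle
    exact h0 (by simpa [Nat.sub_eq_zero_of_le hle] using hs s le_rfl)
  exact Nat.le_findGreatest (by nlinarith) hs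

end runLength

theorem exists_add_mul_le_iff_exists_sub_mul {m t g x : ℕ} (h : t * g ≤ m) :
    (∃ i ≤ t, x = m - t * g + i * g) ↔ ∃ j ≤ t, x = m - j * g := by
  constructor
  · rintro ⟨i, hi, rfl⟩
    refine ⟨t - i, Nat.sub_le t i, ?_⟩
    have : i * g ≤ t * g := Nat.mul_le_mul_right g hi
    rw [Nat.sub_mul]
    omega
  · rintro ⟨j, hj, rfl⟩
    refine ⟨t - j, Nat.sub_le t j, ?_⟩
    have : j * g ≤ t * g := Nat.mul_le_mul_right g hj
    rw [Nat.sub_mul]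
    omega

theorem exists_run_to_of_forall_exists_add {α : Type*} [Finite α] (f : α → ℕ) (p : α → Prop)
    {g : ℕ} (hg : 0 < g) (step : ∀ u, ¬ p u → ∃ w, f w = f u + g) (u : α) :
    ∃ w, p w ∧ ∃ s, f w = f u + s * g ∧ ∀ i ≤ s, f w - i * g ∈ Set.range f := by
  obtain ⟨N, hN⟩ := (Set.finite_range f).bddAbove
  have hle : ∀ u, f u ≤ N := fun u => hN (Set.mem_range_self u)
  induction hn : N + 1 - f u using Nat.strong_induction_on generalizing u with
  | _ n ih =>
    by_cases hu : p u
    · exact ⟨u, hu, 0, by simp, fun i hi => ⟨u, by simp [Nat.le_zero.mp hi]⟩⟩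
    obtain ⟨w', hw'⟩ := step u hu
    have hlt : N + 1 - f w' < n := by have := hle w'; omega
    obtain ⟨w, hw, s, hws, hrun⟩ := ih _ hlt w' rfl
    refine ⟨w, hw, s + 1, by rw [hws, hw']; ring, fun i hi => ?_⟩
    rcases Nat.lt_or_eq_of_le hi with hi | rfl
    · exact hrun i (Nat.lt_succ_iff.mp hi)
    · exact ⟨u, by rw [hws, hw']; simp only [Nat.succ_mul]; omega⟩

namespace IsSumLabeling

variable {V : Type*} {G : SimpleGraph V} {ℓ : V → ℕ}

theorem zero_notMem_range (hℓ : IsSumLabeling G ℓ) : 0 ∉ Set.range ℓ := by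
  rintro ⟨u, hu⟩
  have := hℓ.1 u
  omega

theorem exists_label_eq_add_of_adj (hℓ : IsSumLabeling G ℓ) {v u : V} (h : G.Adj v u) :
    ∃ w, ℓ w = ℓ u + ℓ v := by
  obtain ⟨w, hw⟩ := (hℓ.2 v u h.ne).1 h
  exact ⟨w, by omega⟩

theorem exists_terminal_run [Finite V] (hℓ : IsSumLabeling G ℓ) (v u : V) :
    ∃ w, ¬ G.Adj v w ∧ ∃ s, ℓ w = ℓ u + s * ℓ v ∧ ∀ i ≤ s, ℓ w - i * ℓ v ∈ Set.range ℓ :=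
  exists_run_to_of_forall_exists_add ℓ (¬ G.Adj v ·) (hℓ.1 v)
    (fun _ hu => hℓ.exists_label_eq_add_of_adj (not_not.mp hu)) u

theorem range_eq_biUnion_runs [Finite V] (hℓ : IsSumLabeling G ℓ) (v : V) :
    Set.range ℓ = ⋃ w ∈ {w | ¬ G.Adj v w},
      {x | ∃ j ≤ runLength (Set.range ℓ) (ℓ v) (ℓ w), x = ℓ w - j * ℓ v} := by
  apply Set.Subset.antisymm
  · rintro _ ⟨u, rfl⟩
    obtain ⟨w, hw, s, hws, hrun⟩ := hℓ.exists_terminal_run v u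
    have hs := le_runLength hℓ.zero_notMem_range (hℓ.1 v) hrun
    exact Set.mem_biUnion hw ⟨s, hs, by omega⟩
  · simp only [Set.subset_def, Set.mem_iUnion]
    rintro _ ⟨w, -, j, hj, rfl⟩
    exact sub_mul_mem_of_le_runLength (Set.mem_range_self w) hj

end IsSumLabeling

/-- If the vertex `v` has exactly `k` terminals and carries label `g`, then the
label-set `M` is a union of at most `k` arithmetic progressions with
difference `g`: each progression ends at a terminal label and every proper
terminal label is the last element of one of the progressions. -/
theorem cover_by_sequences {V : Type*} [Fintype V]
    (G : SimpleGraph V) (ℓ : V → ℕ) (hℓ : IsSumLabeling G ℓ) (v : V) (k : ℕ)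
    (hterm : Set.ncard {w : V | ¬ G.Adj v w} = k) (g : ℕ) (hg : g = ℓ v) :
    ∃ F : Finset (ℕ × ℕ), F.card ≤ k ∧
      (Set.range ℓ = ⋃ p ∈ F, {x : ℕ | ∃ i ≤ p.2, x = p.1 + i * g}) ∧
      (∀ p ∈ F, ∃ w : V, ¬ G.Adj v w ∧ ℓ w = p.1 + p.2 * g) ∧
      (∀ w : V, w ≠ v → ¬ G.Adj v w → ∃ p ∈ F, ℓ w = p.1 + p.2 * g) := by
  classical
  subst hg
  set t := fun w => runLength (Set.range ℓ) (ℓ v) (ℓ w)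
  have ht : ∀ w, t w * ℓ v ≤ ℓ w := fun w =>
    (runLength_mul_lt hℓ.zero_notMem_range (Set.mem_range_self w)).le
  have hend : ∀ w, ℓ w = ℓ w - t w * ℓ v + t w * ℓ v := fun w => (Nat.sub_add_cancel (ht w)).symm
  let T := Finset.univ.filter (¬ G.Adj v ·)
  refine ⟨T.image fun w => (ℓ w - t w * ℓ v, t w), ?_, ?_, ?_, ?_⟩
  · rw [← hterm, Set.ncard_eq_toFinset_card' {w | ¬ G.Adj v w}, Set.toFinset_ofPred]
    exact Finset.card_image_le
  · rw [hℓ.range_eq_biUnion_runs v]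
    ext x
    simp [T, t, exists_add_mul_le_iff_exists_sub_mul (ht _)]
  · simp only [Finset.mem_image, forall_exists_index, and_imp]
    rintro _ w hw rfl
    exact ⟨w, (Finset.mem_filter.mp hw).2, hend w⟩
  · intro w _ hw
    exact ⟨_, Finset.mem_image_of_mem _ (by simpa [T] using hw), hend w⟩
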